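/- arXiv:1703.06098 — 9 statements merged into one kernel-verified Lean document; each statement's English description precedes it below -/
import Mathlib

section
/- Let T be a finite rooted tree. Suppose M = (M_{tr})_{t,r∈T} satisfies the condition (H_m): M_{tr} = 0 unless t ⪯ r or r ⪯ t (t and r are comparable in the tree order). If L satisfies the lower-triangularity condition (L_{tr} = 0 unless t ⪰ r, L_{tt} ≠ 0), then the product ML also satisfies (H_m). Similarly, if U satisfies the upper-triangularity condition (U_{tr} = 0 unless t ⪯ r, U_{tt} ≠ 0), then UM satisfies (H_m). -/
/-- On a finite rooted tree (ancestor order `≤`; any two ancestors of a common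
node are comparable), if `M` satisfies (H_m) (`M t r = 0` unless `t` and `r` are
comparable), `L` is lower triangular in the tree order with nonzero diagonal and
`U` is upper triangular in the tree order with nonzero diagonal, then both
`M * L` and `U * M` satisfy (H_m). -/
theorem stmt2 {T : Type*} [Fintype T] [DecidableEq T] [PartialOrder T]
    (root : T) (hroot : ∀ t, root ≤ t)
    (htree : ∀ s t r : T, t ≤ s → r ≤ s → t ≤ r ∨ r ≤ t)
    (M L U : Matrix T T ℝ)
    (hM : ∀ t r : T, ¬ (t ≤ r ∨ r ≤ t) → M t r = 0)
    (hL0 : ∀ t r : T, ¬ r ≤ t → L t r = 0) (hLd : ∀ t : T, L t t ≠ 0)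
    (hU0 : ∀ t r : T, ¬ t ≤ r → U t r = 0) (hUd : ∀ t : T, U t t ≠ 0) :
    (∀ t r : T, ¬ (t ≤ r ∨ r ≤ t) → (M * L) t r = 0) ∧
    (∀ t r : T, ¬ (t ≤ r ∨ r ≤ t) → (U * M) t r = 0) := by
  constructor
  · intro t r h
    rw [Matrix.mul_apply]
    apply Finset.sum_eq_zero
    intro s _
    by_cases hrs : r ≤ s
    · by_cases hts : t ≤ s
      · exact absurd (htree s t r hts hrs) h
      · by_cases hst : s ≤ t
        · exact absurd (Or.inr (hrs.trans hst)) h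
        · rw [hM t s (by tauto), zero_mul]
    · rw [hL0 s r hrs, mul_zero]
  · intro t r h
    rw [Matrix.mul_apply]
    apply Finset.sum_eq_zero
    intro s _
    by_cases hts : t ≤ s
    · by_cases hrs : r ≤ s
      · exact absurd (htree s t r hts hrs) h
      · by_cases hsr : s ≤ r
        · exact absurd (Or.inl (hts.trans hsr)) h
        · rw [hM s r (by tauto), mul_zero]
    · rw [hU0 t s hts, zero_mul]
end

section
/- Let T be a finite rooted tree and Q a symmetric T×T matrix satisfying condition (H_m): Q_{tr} = 0 unless t and r are comparable in the tree order. If Λ is a T×T matrix with Λ_{tr} = 0 unless r ⪯ t and Λ_{tt} ≠ 0 for all t, then the matrix (Λ^T)^{−1} Q Λ^{−1} also satisfies condition (H_m). In particular, the conditional independence structure (H) of a Gaussian vector is preserved under hierarchical reparametrizations. -/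
open Matrix

/-!
Both `Λ⁻¹` and `(Λᵀ)⁻¹ = (Λ⁻¹)ᵀ` are again triangular in the tree order, so a nonzero term
`Λ⁻¹ s t * Q s u * Λ⁻¹ u r` of the entry `(t, r)` forces `t ≤ s`, `r ≤ u` and `s`, `u`
comparable. Then `t` and `r` lie below the larger of `s` and `u`, and in a tree the elements
below a given vertex form a chain.
-/

namespace Matrix

variable {α R : Type*}

section Predicates

variable [LE α] [Zero R]

def IsOrderLowerTriangular (M : Matrix α α R) : Prop :=
  ∀ t r, ¬ r ≤ t → M t r = 0

/-- Condition (H_m). -/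
def IsSupportedOnComparable (M : Matrix α α R) : Prop :=
  ∀ t r, ¬ (t ≤ r ∨ r ≤ t) → M t r = 0

end Predicates

theorem IsOrderLowerTriangular.of_mul_eq_one [Fintype α] [DecidableEq α] [PartialOrder α]
    [Ring R] [NoZeroDivisors R] {B Λ : Matrix α α R} (hBΛ : B * Λ = 1)
    (hΛ : Λ.IsOrderLowerTriangular) (hΛd : ∀ t, Λ t t ≠ 0) : B.IsOrderLowerTriangular := by
  intro t r
  induction r using WellFoundedGT.induction with
  | _ r ih =>
    intro hrt
    -- In entry `(t, r)` of `B * Λ = 1` only `s = r` survives: `s > r` by induction, else by `hΛ`.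
    have hsum : ∑ s, B t s * Λ s r = B t r * Λ r r := by
      refine Finset.sum_eq_single r (fun s _ hsr => ?_) (by simp)
      by_cases hrs : r ≤ s
      · rw [ih s (lt_of_le_of_ne hrs (Ne.symm hsr)) fun hst => hrt (hrs.trans hst), zero_mul]
      · rw [hΛ s r hrs, mul_zero]
    have hentry : B t r * Λ r r = 0 := by
      rw [← hsum, ← mul_apply, hBΛ, one_apply_ne fun h : t = r => hrt (h ▸ le_rfl)]
    exact (mul_eq_zero.mp hentry).resolve_right (hΛd r)

theorem IsOrderLowerTriangular.inv [Fintype α] [DecidableEq α] [PartialOrder α]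
    [CommRing R] [NoZeroDivisors R] {Λ : Matrix α α R}
    (hΛ : Λ.IsOrderLowerTriangular) (hΛd : ∀ t, Λ t t ≠ 0) : Λ⁻¹.IsOrderLowerTriangular := by
  by_cases hdet : IsUnit Λ.det
  · exact .of_mul_eq_one (nonsing_inv_mul Λ hdet) hΛ hΛd
  · intro t r _
    rw [nonsing_inv_apply_not_isUnit Λ hdet, zero_apply]

theorem IsSupportedOnComparable.transpose_mul_mul [Fintype α] [Preorder α]
    [NonUnitalNonAssocSemiring R]
    (htree : ∀ s t r : α, t ≤ s → r ≤ s → t ≤ r ∨ r ≤ t)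
    {Q A : Matrix α α R} (hQ : Q.IsSupportedOnComparable) (hA : A.IsOrderLowerTriangular) :
    (Aᵀ * Q * A).IsSupportedOnComparable := by
  intro t r htr
  simp only [mul_apply, transpose_apply, Finset.sum_mul]
  refine Finset.sum_eq_zero fun u _ => Finset.sum_eq_zero fun s _ => ?_
  by_cases hts : t ≤ s
  · by_cases hru : r ≤ u
    · rw [hQ s u ?_, mul_zero, zero_mul]
      rintro (hsu | hus)
      · exact htr (htree u t r (hts.trans hsu) hru)
      · exact htr (htree s t r hts (hru.trans hus))
    · rw [hA u r hru, mul_zero]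
  · rw [hA s t hts, zero_mul, zero_mul]

end Matrix

theorem stmt4_general {T : Type*} [Fintype T] [DecidableEq T] [PartialOrder T]
    (htree : ∀ s t r : T, t ≤ s → r ≤ s → t ≤ r ∨ r ≤ t)
    (Q Λ : Matrix T T ℝ)
    (hQ : ∀ t r : T, ¬ (t ≤ r ∨ r ≤ t) → Q t r = 0)
    (hΛ0 : ∀ t r : T, ¬ r ≤ t → Λ t r = 0) (hΛd : ∀ t : T, Λ t t ≠ 0) :
    ∀ t r : T, ¬ (t ≤ r ∨ r ≤ t) → ((Λᵀ)⁻¹ * Q * Λ⁻¹) t r = 0 := by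
  have hinv : Λ⁻¹.IsOrderLowerTriangular := IsOrderLowerTriangular.inv hΛ0 hΛd
  rw [← transpose_nonsing_inv]
  exact IsSupportedOnComparable.transpose_mul_mul htree hQ hinv

/-- On a finite rooted tree, if a symmetric matrix `Q` satisfies (H_m)
(`Q t r = 0` unless `t` and `r` are comparable in the ancestor order) and `Λ` is
lower triangular in the tree order with nonzero diagonal, then
`(Λᵀ)⁻¹ * Q * Λ⁻¹` also satisfies (H_m): conditional independence structure (H)
is preserved under hierarchical reparametrizations. -/
theorem stmt4 {T : Type*} [Fintype T] [DecidableEq T] [PartialOrder T]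
    (root : T) (hroot : ∀ t, root ≤ t)
    (htree : ∀ s t r : T, t ≤ s → r ≤ s → t ≤ r ∨ r ≤ t)
    (Q Λ : Matrix T T ℝ)
    (hQsymm : Q.IsSymm)
    (hQ : ∀ t r : T, ¬ (t ≤ r ∨ r ≤ t) → Q t r = 0)
    (hΛ0 : ∀ t r : T, ¬ r ≤ t → Λ t r = 0) (hΛd : ∀ t : T, Λ t t ≠ 0) :
    ∀ t r : T, ¬ (t ≤ r ∨ r ≤ t) → ((Λᵀ)⁻¹ * Q * Λ⁻¹) t r = 0 :=
  stmt4_general htree Q Λ hQ hΛ0 hΛd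
end

section
/- Consider the two-level non-symmetric Gaussian hierarchical model with bespoke parametrization indexed by indicators (λ_1,…,λ_I) ∈ {0,1}^I. The L² rate of convergence of the deterministic-scan Gibbs sampler equals ρ = [Σ_{i:λ_i=1} τ̃_i · τ̃_i/(τ̃_i+τ_a) + Σ_{i:λ_i=0} τ_a · τ_a/(τ̃_i+τ_a)] / [Σ_{i:λ_i=1} τ̃_i + Σ_{i:λ_i=0} τ_a], where τ̃_i = J_i τ_{e,i}. -/
open Matrix Polynomial

/-!
In the parametrization `(μ, β)` the posterior precision `Q` has a star pattern: the `β_i` are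
conditionally independent given `μ`. Hence `U = A - L` is supported on the `μ`-row and `L` on the
`μ`-column below the diagonal, so `L ^ 2 = 0`, `(1 - L)⁻¹ = 1 + L`, and `B = (1 + L) U` has rank
one, `B = v wᵀ`. Its characteristic polynomial is `X ^ I (X - w ⬝ v)`, and
`w ⬝ v = ∑ Q_{μi}² / (Q_{μμ} Q_{ii})` is exactly `ρ`.
-/

namespace Matrix

variable {ι n R K : Type*} [Fintype ι]

/-- When `A` vanishes on the `ι × ι` block, this is its strictly lower triangular part for an order
in which the `Unit` index comes first. -/
def lowerFirstColumn [Zero R] (A : Matrix (Unit ⊕ ι) (Unit ⊕ ι) R) :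
    Matrix (Unit ⊕ ι) (Unit ⊕ ι) R :=
  of fun α α' => α.elim 0 fun i => α'.elim (fun _ => A (Sum.inr i) (Sum.inl ())) 0

theorem lowerFirstColumn_mul_self [Semiring R] (A : Matrix (Unit ⊕ ι) (Unit ⊕ ι) R) :
    lowerFirstColumn A * lowerFirstColumn A = 0 := by
  ext (_ | _) (_ | _) <;> simp [mul_apply, Fintype.sum_sum_type, lowerFirstColumn]

theorem inv_one_sub_lowerFirstColumn [CommRing R] [DecidableEq ι]
    (A : Matrix (Unit ⊕ ι) (Unit ⊕ ι) R) :
    (1 - lowerFirstColumn A)⁻¹ = 1 + lowerFirstColumn A := by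
  apply inv_eq_right_inv
  have h : (1 - lowerFirstColumn A) * (1 + lowerFirstColumn A) =
      1 - lowerFirstColumn A * lowerFirstColumn A := by noncomm_ring
  rw [h, lowerFirstColumn_mul_self, sub_zero]

theorem inv_one_sub_lowerFirstColumn_mul_eq_vecMulVec [CommRing R] [DecidableEq ι]
    (A : Matrix (Unit ⊕ ι) (Unit ⊕ ι) R) (h₀₀ : A (Sum.inl ()) (Sum.inl ()) = 0)
    (h₁₁ : ∀ i j, A (Sum.inr i) (Sum.inr j) = 0) :
    (1 - lowerFirstColumn A)⁻¹ * (A - lowerFirstColumn A) =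
      vecMulVec (Sum.elim 1 fun i => A (Sum.inr i) (Sum.inl ()))
        (Sum.elim 0 fun j => A (Sum.inl ()) (Sum.inr j)) := by
  rw [inv_one_sub_lowerFirstColumn]
  ext (_ | i) (_ | j) <;>
    simp [mul_apply, Fintype.sum_sum_type, lowerFirstColumn, vecMulVec_apply, one_apply, h₀₀, h₁₁]

theorem charpoly_vecMulVec_sum_unit [CommRing R] [DecidableEq ι] (u v : Unit ⊕ ι → R) :
    (vecMulVec u v).charpoly = X ^ Fintype.card ι * (X - C (u ⬝ᵥ v)) := by
  rw [charpoly_vecMulVec, Fintype.card_sum, Fintype.card_unit, add_tsub_cancel_left,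
    smul_eq_C_mul]
  ring

theorem isGreatest_abs_spectrum_of_charpoly_eq [Fintype n] [DecidableEq n] [Field K]
    [LinearOrder K] [IsStrictOrderedRing K] {M : Matrix n n K} {k : ℕ} {ρ : K}
    (hM : M.charpoly = X ^ k * (X - C ρ)) (hρ : 0 ≤ ρ) :
    IsGreatest {x | ∃ μ ∈ spectrum K M, x = |μ|} ρ := by
  refine ⟨⟨ρ, mem_spectrum_iff_isRoot_charpoly.2 (by simp [hM]), (abs_of_nonneg hρ).symm⟩, ?_⟩
  rintro _ ⟨μ, hμ, rfl⟩
  simp only [mem_spectrum_iff_isRoot_charpoly, hM, IsRoot.def, eval_mul, eval_pow, eval_X,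
    eval_sub, eval_C, mul_eq_zero, sub_eq_zero] at hμ
  rcases hμ with hμ | rfl
  · simp [eq_zero_of_pow_eq_zero hμ, hρ]
  · exact (abs_of_nonneg hρ).le

end Matrix

/-- Two-level non-symmetric Gaussian hierarchical model NS2 with bespoke
parametrization `β_i = γ_i - λ_i μ`, `λ_i ∈ {0,1}` (`lam i = true` means
non-centred).  `Q` is the posterior precision matrix of `(μ, β_1, …, β_I)`,
`A α α' = -Q α α'/Q α α` (zero diagonal), `L` its strictly lower triangular
part in the sweep order (μ first), `B = (1-L)⁻¹(A-L)`.  The L² rate of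
convergence of the deterministic-scan Gibbs sampler — the spectral radius of
`B` — equals
`ρ = (∑_{i:λ_i=1} τ̃_i·τ̃_i/(τ̃_i+τ_a) + ∑_{i:λ_i=0} τ_a·τ_a/(τ̃_i+τ_a)) /
     (∑_{i:λ_i=1} τ̃_i + ∑_{i:λ_i=0} τ_a)`, with `τ̃_i = J_i τ_{e,i}`:
the charpoly of `B` is `X^I (X - ρ)` and `ρ` is the largest eigenvalue
modulus. -/
theorem stmt6 (I : ℕ) (J : Fin I → ℕ) (hJ : ∀ i, 0 < J i)
    (τa : ℝ) (hτa : 0 < τa) (τe : Fin I → ℝ) (hτe : ∀ i, 0 < τe i)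
    (lam : Fin I → Bool) :
    let t : Fin I → ℝ := fun i => (J i : ℝ) * τe i
    let Q : Matrix (Unit ⊕ Fin I) (Unit ⊕ Fin I) ℝ := Matrix.of fun α α' =>
      match α, α' with
      | Sum.inl _, Sum.inl _ => ∑ i, (if lam i then t i else τa)
      | Sum.inl _, Sum.inr i => if lam i then t i else -τa
      | Sum.inr i, Sum.inl _ => if lam i then t i else -τa
      | Sum.inr i, Sum.inr j => if i = j then τa + t i else 0
    let A : Matrix (Unit ⊕ Fin I) (Unit ⊕ Fin I) ℝ := Matrix.of fun α α' =>
      if α = α' then 0 else -Q α α' / Q α α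
    let L : Matrix (Unit ⊕ Fin I) (Unit ⊕ Fin I) ℝ := Matrix.of fun α α' =>
      match α, α' with
      | Sum.inr i, Sum.inl _ => A (Sum.inr i) (Sum.inl ())
      | _, _ => 0
    let B : Matrix (Unit ⊕ Fin I) (Unit ⊕ Fin I) ℝ := (1 - L)⁻¹ * (A - L)
    let ρ : ℝ :=
      (∑ i, if lam i then t i * (t i / (t i + τa)) else τa * (τa / (t i + τa))) /
      (∑ i, if lam i then t i else τa)
    B.charpoly = X ^ I * (X - C ρ) ∧
      IsGreatest {x : ℝ | ∃ μ ∈ spectrum ℝ B, x = |μ|} ρ := by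
  intro t Q A L B ρ
  have ht : ∀ i, 0 < t i := fun i => mul_pos (by exact_mod_cast hJ i) (hτe i)
  have hL : L = lowerFirstColumn A := by ext (_ | _) (_ | _) <;> rfl
  have hB : B = vecMulVec (Sum.elim 1 fun i => A (Sum.inr i) (Sum.inl ()))
      (Sum.elim 0 fun j => A (Sum.inl ()) (Sum.inr j)) := by
    simp only [B, hL]
    exact inv_one_sub_lowerFirstColumn_mul_eq_vecMulVec A (by simp [A])
      fun i j => by by_cases h : i = j <;> simp [A, Q, h]
  have hdot : (Sum.elim (1 : Unit → ℝ) fun i => A (Sum.inr i) (Sum.inl ())) ⬝ᵥ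
      (Sum.elim 0 fun j => A (Sum.inl ()) (Sum.inr j)) = ρ := by
    simp only [dotProduct, Fintype.sum_sum_type, ρ, Finset.sum_div, of_apply, reduceCtorEq,
      ↓reduceIte, Sum.elim_inl, Sum.elim_inr, Pi.zero_apply, mul_zero, Finset.sum_const_zero,
      zero_add, A, Q]
    refine Finset.sum_congr rfl fun i _ => ?_
    cases lam i <;> simp only [Bool.false_eq_true, ↓reduceIte, neg_neg] <;> ring
  have hρ : 0 ≤ ρ := by
    refine div_nonneg (Finset.sum_nonneg fun i _ => ?_) (Finset.sum_nonneg fun i _ => ?_) <;>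
      have := ht i <;> split_ifs <;> positivity
  have hcp : B.charpoly = X ^ I * (X - C ρ) := by
    rw [hB, charpoly_vecMulVec_sum_unit, hdot, Fintype.card_fin]
  exact ⟨hcp, isGreatest_abs_spectrum_of_charpoly_eq hcp hρ⟩
end

section
/- Given positive reals τ_a, τ̃_1, …, τ̃_I, define ρ_{λ_1…λ_I} as the weighted average [Σ_{i:λ_i=1} τ̃_i²/(τ̃_i+τ_a) + Σ_{i:λ_i=0} τ_a²/(τ̃_i+τ_a)] / [Σ_{i:λ_i=1} τ̃_i + Σ_{i:λ_i=0} τ_a]. Let λ̄_i = 1 if τ_a > τ̃_i and 0 otherwise. Then ρ_{λ̄_1…λ̄_I} ≤ ρ_{λ_1…λ_I} for every (λ_1,…,λ_I) ∈ {0,1}^I. -/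
set_option maxHeartbeats 1600000

lemma pair_ineq (tj tk τa p q : ℝ) (htj : 0 < tj) (htk : 0 < tk) (hτ : 0 < τa)
    (hp : p = tj ∨ p = τa) (hq : q = tk ∨ q = τa) :
    (min tj τa)^2/(tj+τa) * q + (min tk τa)^2/(tk+τa) * p ≤
      p^2/(tj+τa) * (min tk τa) + q^2/(tk+τa) * (min tj τa) := by
  have hsj : 0 < tj + τa := by linarith
  have hsk : 0 < tk + τa := by linarith
  rw [div_mul_eq_mul_div, div_mul_eq_mul_div, div_mul_eq_mul_div, div_mul_eq_mul_div,
    div_add_div _ _ (ne_of_gt hsj) (ne_of_gt hsk),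
    div_add_div _ _ (ne_of_gt hsj) (ne_of_gt hsk),
    div_le_div_iff_of_pos_right (by positivity)]
  rcases le_total tj τa with h1 | h1 <;> rcases le_total tk τa with h2 | h2 <;>
    rcases hp with rfl | rfl <;> rcases hq with rfl | rfl <;>
    simp only [min_eq_left, min_eq_right, h1, h2] <;>
    nlinarith [mul_pos htj htk, mul_pos htj hτ, mul_pos htk hτ,
      mul_nonneg (sub_nonneg.2 h1) (sub_nonneg.2 h2),
      mul_nonneg (mul_pos htj hτ).le (sub_nonneg.2 h2),
      mul_nonneg (mul_pos htk hτ).le (sub_nonneg.2 h1),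
      mul_nonneg (mul_pos htj htk).le (sub_nonneg.2 h1),
      mul_nonneg (mul_pos htj htk).le (sub_nonneg.2 h2),
      mul_nonneg (mul_pos htj hτ).le (sub_nonneg.2 h1),
      mul_nonneg (mul_pos htk hτ).le (sub_nonneg.2 h2)]

lemma expand_sym {I : ℕ} (f g : Fin I → ℝ) :
    (∑ j, f j) * (∑ k, g k) + (∑ j, f j) * (∑ k, g k)
      = ∑ j, ∑ k, (f j * g k + f k * g j) := by
  rw [Finset.sum_mul_sum]
  nth_rewrite 2 [show (∑ j, ∑ k, f j * g k) = ∑ j, ∑ k, f k * g j from Finset.sum_comm]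
  rw [← Finset.sum_add_distrib]
  exact Finset.sum_congr rfl fun j _ => (Finset.sum_add_distrib).symm

/-- Optimality of the coordinatewise centering rule for the two-level model:
with `ρ(λ)` the weighted-average rate and `λ̄_i = 1` iff `τ_a > τ̃_i`,
`ρ(λ̄) ≤ ρ(λ)` for every `λ ∈ {0,1}^I`. -/
theorem stmt8 (I : ℕ) (τa : ℝ) (hτa : 0 < τa)
    (t : Fin I → ℝ) (ht : ∀ i, 0 < t i) :
    let ρ : (Fin I → Bool) → ℝ := fun l =>
      (∑ j, if l j then t j ^ 2 / (t j + τa) else τa ^ 2 / (t j + τa)) /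
      (∑ j, if l j then t j else τa)
    ∀ lam : Fin I → Bool, ρ (fun i => decide (t i < τa)) ≤ ρ lam := by
  intro ρ lam
  rcases Nat.eq_zero_or_pos I with hI | hI
  · subst hI; simp [ρ]
  have : Nonempty (Fin I) := ⟨⟨0, hI⟩⟩
  set x : Fin I → ℝ := fun j => if lam j then t j else τa with hxdef
  set m : Fin I → ℝ := fun j => min (t j) τa with hmdef
  have hxval : ∀ j, x j = t j ∨ x j = τa := by
    intro j; simp only [hxdef]; split <;> [left; right] <;> rfl
  have hxpos : ∀ j, 0 < x j := by
    intro j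
    rcases hxval j with h | h <;> rw [h]
    · exact ht j
    · exact hτa
  have hmpos : ∀ j, 0 < m j := fun j => lt_min (ht j) hτa
  have hρlam : ρ lam = (∑ j, (x j)^2 / (t j + τa)) / (∑ j, x j) := by
    simp only [ρ, hxdef]
    congr 1
    exact Finset.sum_congr rfl fun j _ => by split <;> rfl
  have hρbar : ρ (fun i => decide (t i < τa))
      = (∑ j, (m j)^2 / (t j + τa)) / (∑ j, m j) := by
    simp only [ρ, hmdef]
    have hm : ∀ j, (if t j < τa then t j else τa) = min (t j) τa := by
      intro j
      rcases lt_or_ge (t j) τa with h | h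
      · simp [h, min_eq_left h.le]
      · simp [not_lt.2 h, min_eq_right h]
    congr 1
    · refine Finset.sum_congr rfl fun j _ => ?_
      simp only [decide_eq_true_eq]
      rw [← hm j]; split <;> rfl
    · refine Finset.sum_congr rfl fun j _ => ?_
      simp only [decide_eq_true_eq]
      exact hm j
  rw [hρlam, hρbar]
  have hdm : 0 < ∑ j, m j :=
    Finset.sum_pos (fun j _ => hmpos j) Finset.univ_nonempty
  have hdx : 0 < ∑ j, x j :=
    Finset.sum_pos (fun j _ => hxpos j) Finset.univ_nonempty
  rw [div_le_div_iff₀ hdm hdx]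
  have key : ∀ j k : Fin I,
      (m j)^2/(t j + τa) * x k + (m k)^2/(t k + τa) * x j ≤
        (x j)^2/(t j + τa) * m k + (x k)^2/(t k + τa) * m j := by
    intro j k
    exact pair_ineq (t j) (t k) τa (x j) (x k) (ht j) (ht k) hτa (hxval j) (hxval k)
  have h1 := expand_sym (fun j => (m j)^2/(t j + τa)) x
  have h2 := expand_sym (fun j => (x j)^2/(t j + τa)) m
  have h3 : (∑ j, ∑ k, ((m j)^2/(t j + τa) * x k + (m k)^2/(t k + τa) * x j))
      ≤ ∑ j, ∑ k, ((x j)^2/(t j + τa) * m k + (x k)^2/(t k + τa) * m j) :=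
    Finset.sum_le_sum fun j _ => Finset.sum_le_sum fun k _ => key j k
  nlinarith [h3, h1, h2]
end

section
/- Let σ̃_a², σ̃_b², σ̃_e² be positive reals. Define ρ_{(0,0)} = 1 − [σ̃_a²/(σ̃_a²+σ̃_b²)]·[σ̃_b²/(σ̃_b²+σ̃_e²)], ρ_{(1,1)} = max{σ̃_a²/(σ̃_a²+σ̃_e²), σ̃_b²/(σ̃_b²+σ̃_e²)}, ρ_{(0,1)} = 1 − [σ̃_a²/(σ̃_a²+σ̃_e²)]·[σ̃_e²/(σ̃_b²+σ̃_e²)], ρ_{(1,0)} = max{σ̃_a²/(σ̃_a²+σ̃_b²), σ̃_e²/(σ̃_b²+σ̃_e²)}. Then the minimum over the four of these quantities is at most 2/3, with equality if and only if σ̃_a² = σ̃_b² + σ̃_e² and σ̃_b² = σ̃_e². -/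
lemma stmt9_key (a b e : ℝ) (ha : 0 < a) (hb : 0 < b) (he : 0 < e)
    (h1 : 3 * (a * b) ≤ (a + b) * (b + e))
    (h2 : 2 * e ≤ a ∨ 2 * e ≤ b)
    (h3 : 3 * (a * e) ≤ (a + e) * (b + e))
    (h4 : 2 * b ≤ a ∨ 2 * b ≤ e) :
    a = b + e ∧ b = e := by
  rcases h2 with h2 | h2 <;> rcases h4 with h4 | h4
  · have hle : a ≤ b + e := by nlinarith
    constructor <;> linarith
  · exfalso; nlinarith
  · exfalso; nlinarith
  · exfalso; linarith

/-- For positive normalized variances `a = σ̃_a²`, `b = σ̃_b²`, `e = σ̃_e²`, the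
minimum of the four three-level Gibbs sampler rates
`ρ₀₀, ρ₁₁, ρ₀₁, ρ₁₀` is at most `2/3`, with equality iff `a = b + e` and
`b = e`. -/
theorem stmt9 (a b e : ℝ) (ha : 0 < a) (hb : 0 < b) (he : 0 < e) :
    let ρ00 : ℝ := 1 - a / (a + b) * (b / (b + e))
    let ρ11 : ℝ := max (a / (a + e)) (b / (b + e))
    let ρ01 : ℝ := 1 - a / (a + e) * (e / (b + e))
    let ρ10 : ℝ := max (a / (a + b)) (e / (b + e))
    min (min ρ00 ρ11) (min ρ01 ρ10) ≤ 2 / 3 ∧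
      (min (min ρ00 ρ11) (min ρ01 ρ10) = 2 / 3 ↔ a = b + e ∧ b = e) := by
  intro ρ00 ρ11 ρ01 ρ10
  have hab : (0:ℝ) < a + b := by linarith
  have hbe : (0:ℝ) < b + e := by linarith
  have hae : (0:ℝ) < a + e := by linarith
  have hne : e ≠ 0 := he.ne'
  have hval : a = b + e → b = e → min (min ρ00 ρ11) (min ρ01 ρ10) = 2 / 3 := by
    intro hA hB
    subst hB; subst hA
    have hbne : b ≠ 0 := hb.ne'
    have e1 : (b + b) / ((b + b) + b) = 2 / 3 := by
      rw [div_eq_iff (by linarith)]; ring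
    have e2 : b / (b + b) = 1 / 2 := by
      rw [div_eq_iff (by linarith)]; ring
    have v1 : ρ00 = 2 / 3 := by
      show 1 - (b + b) / ((b + b) + b) * (b / (b + b)) = 2 / 3
      rw [e1, e2]; norm_num
    have v2 : ρ11 = 2 / 3 := by
      show max ((b + b) / ((b + b) + b)) (b / (b + b)) = 2 / 3
      rw [e1, e2]; norm_num
    have v3 : ρ01 = 2 / 3 := by
      show 1 - (b + b) / ((b + b) + b) * (b / (b + b)) = 2 / 3
      rw [e1, e2]; norm_num
    have v4 : ρ10 = 2 / 3 := by
      show max ((b + b) / ((b + b) + b)) (b / (b + b)) = 2 / 3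
      rw [e1, e2]; norm_num
    rw [v1, v2, v3, v4]; norm_num
  have hfwd : 2 / 3 ≤ min (min ρ00 ρ11) (min ρ01 ρ10) → a = b + e ∧ b = e := by
    intro h
    rw [le_min_iff, le_min_iff, le_min_iff] at h
    obtain ⟨⟨h00, h11⟩, h01, h10⟩ := h
    have H1 : 3 * (a * b) ≤ (a + b) * (b + e) := by
      have : a / (a + b) * (b / (b + e)) ≤ 1 / 3 := by
        have : (2:ℝ)/3 ≤ 1 - a / (a + b) * (b / (b + e)) := h00
        linarith
      rw [div_mul_div_comm, div_le_iff₀ (by positivity)] at this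
      linarith
    have H3 : 3 * (a * e) ≤ (a + e) * (b + e) := by
      have : a / (a + e) * (e / (b + e)) ≤ 1 / 3 := by
        have : (2:ℝ)/3 ≤ 1 - a / (a + e) * (e / (b + e)) := h01
        linarith
      rw [div_mul_div_comm, div_le_iff₀ (by positivity)] at this
      linarith
    have H2 : 2 * e ≤ a ∨ 2 * e ≤ b := by
      rcases le_max_iff.mp h11 with h | h
      · left; rw [le_div_iff₀ hae] at h; linarith
      · right; rw [le_div_iff₀ hbe] at h; linarith
    have H4 : 2 * b ≤ a ∨ 2 * b ≤ e := by
      rcases le_max_iff.mp h10 with h | h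
      · left; rw [le_div_iff₀ hab] at h; linarith
      · right; rw [le_div_iff₀ hbe] at h; linarith
    exact stmt9_key a b e ha hb he H1 H2 H3 H4
  constructor
  · by_contra hc
    push_neg at hc
    obtain ⟨hA, hB⟩ := hfwd hc.le
    rw [hval hA hB] at hc
    exact lt_irrefl _ hc
  · constructor
    · intro h; exact hfwd h.ge
    · rintro ⟨hA, hB⟩; exact hval hA hB
end

section
/- Let σ̃_a², σ̃_b², σ̃_e² > 0 and define ρ_{(0,0)}, ρ_{(1,1)}, ρ_{(0,1)}, ρ_{(1,0)} as in the three-level rate formulas. Then: ρ of the parametrization with centred lowest level is ≤ ρ of the corresponding parametrization with non-centred lowest level iff σ̃_b² ≥ σ̃_e² (for both choices at the middle level); and ρ of the parametrization with centred middle level is ≤ ρ with non-centred middle level iff σ̃_a² ≥ σ̃_b² + σ̃_e² (for both choices at the lowest level). -/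
/-- With the four three-level rates (first index: middle level, second:
lowest level; `0` = centred), centering the lowest level is at least as good
iff `σ̃_b² ≥ σ̃_e²` (for both middle-level choices), and centering the middle
level is at least as good iff `σ̃_a² ≥ σ̃_b² + σ̃_e²` (for both lowest-level
choices). -/
theorem stmt10 (a b e : ℝ) (ha : 0 < a) (hb : 0 < b) (he : 0 < e) :
    let ρ00 : ℝ := 1 - a / (a + b) * (b / (b + e))
    let ρ11 : ℝ := max (a / (a + e)) (b / (b + e))
    let ρ01 : ℝ := 1 - a / (a + e) * (e / (b + e))
    let ρ10 : ℝ := max (a / (a + b)) (e / (b + e))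
    (ρ00 ≤ ρ01 ↔ e ≤ b) ∧ (ρ10 ≤ ρ11 ↔ e ≤ b) ∧
    (ρ00 ≤ ρ10 ↔ b + e ≤ a) ∧ (ρ01 ≤ ρ11 ↔ b + e ≤ a) := by
  have hab : (0:ℝ) < a + b := by linarith
  have hae : (0:ℝ) < a + e := by linarith
  have hbe : (0:ℝ) < b + e := by linarith
  intro ρ00 ρ11 ρ01 ρ10
  have h00 : ρ00 = (a * e + b * (b + e)) / ((a + b) * (b + e)) := by
    show (1:ℝ) - a / (a + b) * (b / (b + e)) = _
    field_simp; ring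
  have h01 : ρ01 = (a * b + b * e + e * e) / ((a + e) * (b + e)) := by
    show (1:ℝ) - a / (a + e) * (e / (b + e)) = _
    field_simp; ring
  refine ⟨?_, ?_, ?_, ?_⟩
  · rw [h00, h01, div_le_div_iff₀ (by positivity) (by positivity)]
    constructor
    · intro h; nlinarith [mul_pos (mul_pos ha ha) hbe]
    · intro h; nlinarith [mul_pos (mul_pos ha ha) hbe]
  · constructor
    · intro h
      by_contra hc
      push_neg at hc
      have h1 : a / (a + e) < a / (a + b) :=
        div_lt_div_of_pos_left ha hab (by linarith)
      have h2 : b / (b + e) < e / (b + e) := by gcongr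
      exact absurd h (not_le.mpr (max_lt_max h1 h2))
    · intro h
      have h1 : a / (a + b) ≤ a / (a + e) := by gcongr
      have h2 : e / (b + e) ≤ b / (b + e) := by gcongr
      exact max_le_max h1 h2
  · have hlt : e / (b + e) < ρ00 := by
      rw [h00, div_lt_div_iff₀ hbe (by positivity)]
      nlinarith [mul_pos hb hb]
    show ρ00 ≤ max (a / (a + b)) (e / (b + e)) ↔ _
    rw [le_max_iff, or_iff_left (not_le.mpr hlt), h00,
      div_le_div_iff₀ (by positivity) hab]
    constructor
    · intro h; nlinarith [mul_pos hab hb]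
    · intro h; nlinarith [mul_pos hab hb]
  · have hlt : b / (b + e) < ρ01 := by
      rw [h01, div_lt_div_iff₀ hbe (by positivity)]
      nlinarith [mul_pos (mul_pos he he) hbe]
    show ρ01 ≤ max (a / (a + e)) (b / (b + e)) ↔ _
    rw [le_max_iff, or_iff_left (not_le.mpr hlt), h01,
      div_le_div_iff₀ (by positivity) hae]
    constructor
    · intro h; nlinarith [mul_pos hae he]
    · intro h; nlinarith [mul_pos hae he]
end

section
/- Let T be a finite rooted tree and X a root-to-leaf Markov chain as above. Let (β_t)_{t∈T_d} be jointly Gaussian with E[β_t] = 0, E[β_t²] = 1/P(t), and E[β_tβ_s] = 0 for distinct t, s at level d. Then for any p < p' ≤ d and any r ∈ T_p, r' ∈ T_{p'}: E[(φ^{(p')}_{r'}β^{(d)})²] = 1/P(r'), and E[φ^{(p)}_r β^{(d)} · φ^{(p')}_{r'} β^{(d)}] = P(r'|r)/P(r'), which equals 1/P(r) when r' ≻ r and 0 otherwise. Consequently E[δ^{(p)}_r β^{(d)} · δ^{(p')}_{r'} β^{(d)}] = 0, i.e., residuals at different coarseness levels are uncorrelated. -/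
/-- Lemma `residual_independence`, second-moment form: on a finite rooted
tree carrying a root-to-leaf Markov chain with marginals `Pr` and conditionals
`Pc` (satisfying the self, normalization, Bayes/unique-path and tower
properties), let `β = (β_t)_{lev t = d}` have second moments
`E[β_t β_s] = 1_{t=s}/Pr t`, so that
`E[φ_u β · φ_v β] = ∑_{t,s : lev = d} Pc t u · Pc s v · 1_{t=s}/Pr t`.
Then for `r` at level `p` and `r'` at level `p'` with `p < p' ≤ d`:
`E[(φ_{r'}β)²] = 1/Pr r'`, `E[φ_r β · φ_{r'} β] = Pc r' r / Pr r'`, which is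
`1/Pr r` when `r' ≻ r` and `0` otherwise; consequently the residuals satisfy
`E[δ_r β · δ_{r'} β] = 0`. -/
theorem stmt17 {T : Type*} [Fintype T] [DecidableEq T]
    (root : T) (pa : T → T) (lev : T → ℕ)
    (hroot : lev root = 0) (hlev0 : ∀ t : T, lev t = 0 → t = root)
    (hpa : ∀ t : T, t ≠ root → lev (pa t) + 1 = lev t)
    (hparoot : pa root = root)
    (Pr : T → ℝ) (Pc : T → T → ℝ)
    (hPrpos : ∀ t, 0 < Pr t)
    (hPcself : ∀ t, Pc t t = 1)
    (hPcsum : ∀ (r : T) (m : ℕ), lev r ≤ m →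
      ∑ t ∈ Finset.univ.filter (fun t => lev t = m), Pc t r = 1)
    (hbayes : ∀ r t : T, lev r ≤ lev t →
      Pc t r * Pr r = if pa^[lev t - lev r] t = r then Pr t else 0)
    (htower : ∀ (r t : T) (m : ℕ), lev r ≤ m → m ≤ lev t →
      Pc t r = ∑ s ∈ Finset.univ.filter (fun s => lev s = m), Pc t s * Pc s r)
    (d p p' : ℕ) (hpp' : p < p') (hp'd : p' ≤ d)
    (r r' : T) (hr : lev r = p) (hr' : lev r' = p') :
    let Eφφ : T → T → ℝ := fun u v =>
      ∑ t ∈ Finset.univ.filter (fun t => lev t = d),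
        ∑ s ∈ Finset.univ.filter (fun s => lev s = d),
          Pc t u * Pc s v * (if t = s then 1 / Pr t else 0)
    (Eφφ r' r' = 1 / Pr r') ∧
    (Eφφ r r' = Pc r' r / Pr r') ∧
    (Eφφ r r' = if pa^[p' - p] r' = r then 1 / Pr r else 0) ∧
    ((if r = root then Eφφ r r' - Eφφ r (pa r')
      else Eφφ r r' - Eφφ (pa r) r' - Eφφ r (pa r') + Eφφ (pa r) (pa r')) = 0) := by

  intro Eφφ
  have hE : ∀ u v : T, Eφφ u v =
      ∑ t ∈ Finset.univ.filter (fun t => lev t = d),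
        ∑ s ∈ Finset.univ.filter (fun s => lev s = d),
          Pc t u * Pc s v * (if t = s then 1 / Pr t else 0) := fun u v => rfl
  -- diagonal collapse
  have hdiag : ∀ u v : T, Eφφ u v =
      ∑ t ∈ Finset.univ.filter (fun t => lev t = d), Pc t u * Pc t v * (1 / Pr t) := by
    intro u v
    rw [hE]
    refine Finset.sum_congr rfl (fun t ht => ?_)
    rw [Finset.sum_eq_single t]
    · simp
    · intro s _ hst
      rw [if_neg (Ne.symm hst)]; ring
    · intro h; exact absurd ht h
  -- key formula
  have key : ∀ u v : T, lev u ≤ lev v → lev v ≤ d → Eφφ u v = Pc v u / Pr v := by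
    intro u v huv hvd
    have hterm : ∀ t : T, lev t = d →
        Pc t u * Pc t v * (1 / Pr t) = Pc v u * (Pc t v * (1 / Pr v)) := by
      intro t htd
      have hvt : lev v ≤ lev t := by omega
      have hb := hbayes v t hvt
      by_cases hc : pa^[lev t - lev v] t = v
      · rw [if_pos hc] at hb
        have htu : Pc t u = Pc t v * Pc v u := by
          rw [htower u t (lev v) huv hvt]
          rw [Finset.sum_eq_single v]
          · intro s hs hsv
            have hls : lev s = lev v := (Finset.mem_filter.mp hs).2
            have hb2 := hbayes s t (by omega)
            rw [hls, if_neg (by rw [hc]; exact Ne.symm hsv)] at hb2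
            rcases mul_eq_zero.mp hb2 with h | h
            · rw [h]; ring
            · exact absurd h (hPrpos s).ne'
          · intro h
            simp at h
        have hPt := (hPrpos t).ne'
        have hPv := (hPrpos v).ne'
        rw [htu, ← hb]
        have hPcv : Pc t v ≠ 0 := by
          intro h; rw [h, zero_mul] at hb; exact hPt hb.symm
        field_simp
      · rw [if_neg hc] at hb
        have : Pc t v = 0 := by
          rcases mul_eq_zero.mp hb with h | h
          · exact h
          · exact absurd h (hPrpos v).ne'
        rw [this]; ring
    rw [hdiag]
    rw [Finset.sum_congr rfl (fun t ht => hterm t (Finset.mem_filter.mp ht).2)]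
    rw [← Finset.mul_sum, ← Finset.sum_mul, hPcsum v d hvd]
    ring
  -- indicator form
  have keyif : ∀ u v : T, lev u ≤ lev v → lev v ≤ d →
      Eφφ u v = if pa^[lev v - lev u] v = u then 1 / Pr u else 0 := by
    intro u v huv hvd
    rw [key u v huv hvd]
    have hb := hbayes u v huv
    have hPu := (hPrpos u).ne'
    have hPv := (hPrpos v).ne'
    by_cases hc : pa^[lev v - lev u] v = u
    · rw [if_pos hc] at hb ⊢
      field_simp
      linarith [hb]
    · rw [if_neg hc] at hb ⊢
      have : Pc v u = 0 := by
        rcases mul_eq_zero.mp hb with h | h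
        · exact h
        · exact absurd h hPu
      rw [this]; simp
  have hr'ne : r' ≠ root := by
    intro h; rw [h, hroot] at hr'; omega
  have hlevpar' : lev (pa r') = p' - 1 := by
    have := hpa r' hr'ne; omega
  refine ⟨?_, ?_, ?_, ?_⟩
  · rw [key r' r' le_rfl (by omega), hPcself]
  · exact key r r' (by omega) (by omega)
  · rw [keyif r r' (by omega) (by omega), hr, hr']
  · by_cases hrt : r = root
    · rw [if_pos hrt]
      have hp0 : p = 0 := by rw [hrt, hroot] at hr; omega
      rw [keyif r r' (by omega) (by omega), keyif r (pa r') (by omega) (by omega)]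
      have hiter : pa^[lev r' - lev r] r' = pa^[lev (pa r') - lev r] (pa r') := by
        rw [hr, hr', hlevpar', hp0, Nat.sub_zero, Nat.sub_zero]
        conv_lhs => rw [show p' = (p' - 1) + 1 by omega]
        rw [Function.iterate_succ_apply]
      rw [hiter]; ring
    · rw [if_neg hrt]
      have hp1 : 1 ≤ p := by
        rcases Nat.eq_zero_or_pos p with h | h
        · exact absurd (hlev0 r (by omega)) hrt
        · exact h
      have hlevpar : lev (pa r) = p - 1 := by
        have := hpa r hrt; omega
      rw [keyif r r' (by omega) (by omega),
        keyif (pa r) r' (by omega) (by omega),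
        keyif r (pa r') (by omega) (by omega),
        keyif (pa r) (pa r') (by omega) (by omega)]
      have h1 : pa^[lev r' - lev r] r' = pa^[lev (pa r') - lev r] (pa r') := by
        rw [hr, hr', hlevpar',
          show p' - p = (p' - 1 - p) + 1 by omega, Function.iterate_succ_apply]
      have h2 : pa^[lev r' - lev (pa r)] r' = pa^[lev (pa r') - lev (pa r)] (pa r') := by
        rw [hr', hlevpar, hlevpar',
          show p' - (p - 1) = (p' - 1 - (p - 1)) + 1 by omega, Function.iterate_succ_apply]
      rw [h1, h2]; ring
end

section
/- Let T be a finite rooted tree with k levels and let (l_{pd})_{p,d=0}^{k−1} be a real k×k matrix with l_{dd} ≠ 0 for all d. Define the T×T matrix L by L_{tr} = l_{ℓ(t)ℓ(r)} if t ⪰ r and 0 otherwise (symmetric lower-triangularity condition (SL_m)). Then L is invertible and its inverse satisfies (SL_m) for some matrix (l'_{pd}) with l'_{dd} ≠ 0. -/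
/-- Lemma `symmetric_triangular`: on a finite rooted tree with `k` levels
(level function `lev`, strictly monotone for the ancestor order, with a unique
node of each intermediate level on the path between comparable nodes), a matrix
`L` satisfying the symmetric lower-triangularity condition (SL_m):
`L t r = l (lev t) (lev r)` if `r ⪯ t` and `0` otherwise, with `l d d ≠ 0`,
is invertible and its inverse satisfies (SL_m) for some coefficients `l'` with
nonzero diagonal. -/
theorem stmt18 {T : Type*} [Fintype T] [DecidableEq T] [PartialOrder T]
    [DecidableRel ((· ≤ ·) : T → T → Prop)]
    (k : ℕ) (lev : T → ℕ)
    (hk : ∀ t : T, lev t < k)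
    (hmono : ∀ r t : T, r < t → lev r < lev t)
    (hpath : ∀ r t : T, r ≤ t → ∀ m : ℕ, lev r ≤ m → m ≤ lev t →
      ∃! s : T, r ≤ s ∧ s ≤ t ∧ lev s = m)
    (l : ℕ → ℕ → ℝ) (hl : ∀ d, d < k → l d d ≠ 0)
    (L : Matrix T T ℝ)
    (hL : ∀ t r : T, L t r = if r ≤ t then l (lev t) (lev r) else 0) :
    IsUnit L ∧ ∃ l' : ℕ → ℕ → ℝ, (∀ d, d < k → l' d d ≠ 0) ∧
      ∀ t r : T, L⁻¹ t r = if r ≤ t then l' (lev t) (lev r) else 0 := by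
  classical
  -- The level matrix A
  set A : Matrix (Fin k) (Fin k) ℝ :=
    fun p d => if (d : ℕ) ≤ (p : ℕ) then l p d else 0 with hAdef
  have hAtri : A.BlockTriangular OrderDual.toDual := by
    intro i j hij
    have : (i : ℕ) < (j : ℕ) := hij
    simp only [hAdef]
    exact if_neg (not_le.mpr this)
  have hAdet : IsUnit A.det := by
    rw [Matrix.det_of_lowerTriangular A hAtri]
    refine (Finset.prod_ne_zero_iff.mpr fun i _ => ?_).isUnit
    simpa [hAdef] using hl i i.2
  haveI : Invertible A := A.invertibleOfIsUnitDet hAdet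
  have hAinv_tri : A⁻¹.BlockTriangular OrderDual.toDual :=
    Matrix.blockTriangular_inv_of_blockTriangular hAtri
  have hAinvA : A⁻¹ * A = 1 := Matrix.nonsing_inv_mul A hAdet
  -- diagonal entries of the inverse
  have hdiag : ∀ d : Fin k, A⁻¹ d d * l d d = 1 := by
    intro d
    have h1 : (A⁻¹ * A) d d = 1 := by rw [hAinvA]; simp
    rw [Matrix.mul_apply, Finset.sum_eq_single d] at h1
    · simpa [hAdef] using h1
    · intro m _ hm
      rcases lt_or_gt_of_ne hm with h | h
      · simp [hAdef, not_le.mpr h]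
      · rw [hAinv_tri (show OrderDual.toDual m < OrderDual.toDual d from h), zero_mul]
    · simp
  -- level facts
  have hlevle : ∀ {r t : T}, r ≤ t → lev r ≤ lev t := by
    intro r t h
    rcases h.lt_or_eq with h' | h'
    · exact (hmono _ _ h').le
    · rw [h']
  have hleveq : ∀ {r t : T}, r ≤ t → lev r = lev t → r = t := by
    intro r t h he
    rcases h.lt_or_eq with h' | h'
    · exact absurd he (hmono _ _ h').ne
    · exact h'
  -- candidate inverse
  set M : Matrix T T ℝ :=
    fun t r => if r ≤ t then A⁻¹ ⟨lev t, hk t⟩ ⟨lev r, hk r⟩ else 0 with hMdef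
  have key : M * L = 1 := by
    ext t r
    rw [Matrix.mul_apply, Matrix.one_apply]
    by_cases hrt : r ≤ t
    · have e1 : ∑ s : T, M t s * L s r
          = ∑ s ∈ Finset.univ.filter (fun s : T => r ≤ s ∧ s ≤ t), M t s * L s r := by
        refine (Finset.sum_filter_of_ne ?_).symm
        intro s _ hne
        constructor
        · by_contra h
          rw [hL, if_neg h, mul_zero] at hne
          exact hne rfl
        · by_contra h
          rw [hMdef] at hne
          simp only [if_neg h, zero_mul] at hne
          exact hne rfl
      have e2 : ∑ s ∈ Finset.univ.filter (fun s : T => r ≤ s ∧ s ≤ t), M t s * L s r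
          = ∑ m ∈ Finset.univ.filter
              (fun m : Fin k => lev r ≤ (m : ℕ) ∧ (m : ℕ) ≤ lev t),
              A⁻¹ ⟨lev t, hk t⟩ m * A m ⟨lev r, hk r⟩ := by
        refine Finset.sum_bij (fun s _ => (⟨lev s, hk s⟩ : Fin k)) ?_ ?_ ?_ ?_
        · intro s hs
          rw [Finset.mem_filter] at hs ⊢
          exact ⟨Finset.mem_univ _, hlevle hs.2.1, hlevle hs.2.2⟩
        · intro s1 hs1 s2 hs2 he
          rw [Finset.mem_filter] at hs1 hs2
          have hle : lev s1 = lev s2 := by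
            simpa using congrArg (fun x : Fin k => (x : ℕ)) he
          obtain ⟨s, _, huniq⟩ := hpath r t hrt (lev s1) (hlevle hs1.2.1) (hlevle hs1.2.2)
          have h1 := huniq s1 ⟨hs1.2.1, hs1.2.2, rfl⟩
          have h2 := huniq s2 ⟨hs2.2.1, hs2.2.2, hle.symm⟩
          rw [h1, h2]
        · intro m hm
          rw [Finset.mem_filter] at hm
          obtain ⟨s, ⟨hs1, hs2, hs3⟩, _⟩ := hpath r t hrt m hm.2.1 hm.2.2
          exact ⟨s, Finset.mem_filter.mpr ⟨Finset.mem_univ _, hs1, hs2⟩, by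
            simp [Fin.ext_iff, hs3]⟩
        · intro s hs
          rw [Finset.mem_filter] at hs
          simp only [hMdef, hL, hAdef, Matrix.of_apply]
          rw [if_pos hs.2.2, if_pos hs.2.1, if_pos (hlevle hs.2.1)]
      have e3 : ∑ m ∈ Finset.univ.filter
              (fun m : Fin k => lev r ≤ (m : ℕ) ∧ (m : ℕ) ≤ lev t),
              A⁻¹ ⟨lev t, hk t⟩ m * A m ⟨lev r, hk r⟩
          = ∑ m : Fin k, A⁻¹ ⟨lev t, hk t⟩ m * A m ⟨lev r, hk r⟩ := by
        refine Finset.sum_filter_of_ne ?_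
        intro m _ hne
        constructor
        · by_contra h
          rw [hAdef] at hne
          simp only [Matrix.of_apply, if_neg h, mul_zero] at hne
          exact hne rfl
        · by_contra h
          have hlt : (⟨lev t, hk t⟩ : Fin k) < m := by
            simpa [Fin.lt_iff_val_lt_val] using not_le.mp h
          rw [hAinv_tri (show OrderDual.toDual m < OrderDual.toDual (⟨lev t, hk t⟩ : Fin k)
            from hlt), zero_mul] at hne
          exact hne rfl
      have e4 : ∑ m : Fin k, A⁻¹ ⟨lev t, hk t⟩ m * A m ⟨lev r, hk r⟩
          = (1 : Matrix (Fin k) (Fin k) ℝ) ⟨lev t, hk t⟩ ⟨lev r, hk r⟩ := by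
        rw [← hAinvA, Matrix.mul_apply]
      rw [e1, e2, e3, e4, Matrix.one_apply]
      by_cases he : t = r
      · subst he
        simp
      · rw [if_neg he, if_neg]
        intro hcon
        exact he (hleveq hrt (by simpa [Fin.ext_iff] using hcon.symm)).symm
    · rw [if_neg fun h => hrt (le_of_eq h.symm)]
      refine Finset.sum_eq_zero fun s _ => ?_
      by_cases h1 : s ≤ t
      · by_cases h2 : r ≤ s
        · exact absurd (h2.trans h1) hrt
        · rw [hL, if_neg h2, mul_zero]
      · rw [hMdef]; simp [h1]
  have hLM : L * M = 1 := mul_eq_one_comm.mp key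
  have hunit : IsUnit L := ⟨⟨L, M, hLM, key⟩, rfl⟩
  have hLinv : L⁻¹ = M := Matrix.inv_eq_left_inv key
  refine ⟨hunit, fun p d => if h : p < k ∧ d < k then A⁻¹ ⟨p, h.1⟩ ⟨d, h.2⟩ else 1,
    fun d hd => ?_, fun t r => ?_⟩
  · simp only [dif_pos (⟨hd, hd⟩ : d < k ∧ d < k)]
    intro hzero
    have := hdiag ⟨d, hd⟩
    rw [hzero, zero_mul] at this
    exact zero_ne_one this
  · rw [hLinv]
    by_cases h : r ≤ t
    · simp only [hMdef, if_pos h, dif_pos (⟨hk t, hk r⟩ : lev t < k ∧ lev r < k)]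
    · simp only [hMdef, if_neg h]
end

section
/- Consider I triples with r_{ab}^{(i)}, r_{eb}^{(i)} ∈ (0,1] satisfying min_i r_{ab}^{(i)} ≥ max_i r_{ab}^{(i)} r_{eb}^{(i)}. Set c_0 = 1 − (1/I)Σ_i r_{ab}^{(i)} and c_1 = max_i r_{ab}^{(i)} r_{eb}^{(i)}. Then c_0, c_1 ∈ [0,1], the largest squared eigenvalue of the 3×3 matrix [[1, √c_0, 0],[√c_0, 1, √c_1],[0, √c_1, 1]] − I_3 equals c_0 + c_1, and c_0 + c_1 < 1 if and only if (1/I)Σ_i r_{ab}^{(i)} > max_i r_{ab}^{(i)} r_{eb}^{(i)}. -/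

lemma stmt19_det (c0 c1 : ℝ) (hc0 : 0 ≤ c0) (hc1 : 0 ≤ c1) (μ : ℝ) :
    ((algebraMap ℝ (Matrix (Fin 3) (Fin 3) ℝ)) μ -
      ((!![(1 : ℝ), Real.sqrt c0, 0;
           Real.sqrt c0, 1, Real.sqrt c1;
           0, Real.sqrt c1, 1]) - 1)).det = μ * (μ ^ 2 - (c0 + c1)) := by
  have h0 : Real.sqrt c0 * Real.sqrt c0 = c0 := Real.mul_self_sqrt hc0
  have h1 : Real.sqrt c1 * Real.sqrt c1 = c1 := Real.mul_self_sqrt hc1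
  simp [Matrix.det_fin_three, Matrix.sub_apply, Matrix.algebraMap_matrix_apply,
    Matrix.one_apply]
  rw [mul_assoc μ (Real.sqrt c1) (Real.sqrt c1), h1, h0]
  ring

/-- algebraic core of Theorem `rates_3_uneven_CP`: given `I ≥ 1` pairs
`r_ab⁽ⁱ⁾, r_eb⁽ⁱ⁾ ∈ (0,1]` with `min_i r_ab⁽ⁱ⁾ ≥ max_i r_ab⁽ⁱ⁾ r_eb⁽ⁱ⁾`
(equivalently `∀ i j, r_ab⁽ⁱ⁾ r_eb⁽ⁱ⁾ ≤ r_ab⁽ʲ⁾`), set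
`c₀ = 1 - (1/I)∑_i r_ab⁽ⁱ⁾` and `c₁ = max_i r_ab⁽ⁱ⁾ r_eb⁽ⁱ⁾`.  Then
`c₀, c₁ ∈ [0,1]`, the largest squared eigenvalue of
`[[1,√c₀,0],[√c₀,1,√c₁],[0,√c₁,1]] - I₃` equals `c₀ + c₁`, and `c₀ + c₁ < 1`
iff `(1/I)∑_i r_ab⁽ⁱ⁾ > max_i r_ab⁽ⁱ⁾ r_eb⁽ⁱ⁾`. -/
theorem stmt19 (I : ℕ) (hI : 0 < I) (rab reb : Fin I → ℝ)
    (hab : ∀ i, 0 < rab i ∧ rab i ≤ 1) (heb : ∀ i, 0 < reb i ∧ reb i ≤ 1)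
    (hcond : ∀ i j, rab i * reb i ≤ rab j) :
    let c0 : ℝ := 1 - (1 / (I : ℝ)) * ∑ i, rab i
    let c1 : ℝ := Finset.univ.sup' ⟨⟨0, hI⟩, Finset.mem_univ _⟩ (fun i => rab i * reb i)
    (0 ≤ c0 ∧ c0 ≤ 1 ∧ 0 ≤ c1 ∧ c1 ≤ 1) ∧
    IsGreatest
      {x : ℝ | ∃ μ ∈ spectrum ℝ
        ((!![(1 : ℝ), Real.sqrt c0, 0;
             Real.sqrt c0, 1, Real.sqrt c1;
             0, Real.sqrt c1, 1]) - 1), x = μ ^ 2}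
      (c0 + c1) ∧
    (c0 + c1 < 1 ↔ c1 < (1 / (I : ℝ)) * ∑ i, rab i) := by
  intro c0 c1
  have hIpos : (0:ℝ) < I := by exact_mod_cast hI
  have hs_pos : 0 < ∑ i, rab i :=
    Finset.sum_pos (fun i _ => (hab i).1) ⟨⟨0, hI⟩, Finset.mem_univ _⟩
  have hs_le : ∑ i, rab i ≤ (I:ℝ) := by
    calc ∑ i, rab i ≤ ∑ _i : Fin I, (1:ℝ) := Finset.sum_le_sum (fun i _ => (hab i).2)
    _ = I := by simp
  have hmul : (1 / (I:ℝ)) * ∑ i, rab i ≤ 1 := by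
    rw [div_mul_eq_mul_div, one_mul, div_le_one hIpos]; exact hs_le
  have hmul0 : 0 < (1 / (I:ℝ)) * ∑ i, rab i := by positivity
  have hc0 : 0 ≤ c0 := by simp only [c0]; linarith
  have hc0' : c0 ≤ 1 := by simp only [c0]; linarith
  have hc1 : 0 ≤ c1 := by
    have h := Finset.le_sup' (f := fun i => rab i * reb i)
      (b := (⟨0, hI⟩ : Fin I)) (Finset.mem_univ _)
    have := mul_pos (hab ⟨0, hI⟩).1 (heb ⟨0, hI⟩).1
    exact le_trans this.le h
  have hc1' : c1 ≤ 1 := by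
    apply Finset.sup'_le
    intro i _
    calc rab i * reb i ≤ 1 * 1 :=
      mul_le_mul (hab i).2 (heb i).2 (heb i).1.le one_pos.le
    _ = 1 := by ring
  have hc01 : 0 ≤ c0 + c1 := by linarith
  refine ⟨⟨hc0, hc0', hc1, hc1'⟩, ?_, by constructor <;> intro h <;> simp only [c0] at * <;> linarith⟩
  set A : Matrix (Fin 3) (Fin 3) ℝ :=
    (!![(1 : ℝ), Real.sqrt c0, 0;
        Real.sqrt c0, 1, Real.sqrt c1;
        0, Real.sqrt c1, 1]) - 1 with hA
  have key : ∀ μ : ℝ, μ ∈ spectrum ℝ A ↔ μ * (μ ^ 2 - (c0 + c1)) = 0 := by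
    intro μ
    rw [spectrum.mem_iff, Matrix.isUnit_iff_isUnit_det, isUnit_iff_ne_zero, not_ne_iff]
    rw [hA, stmt19_det c0 c1 hc0 hc1 μ]
  constructor
  · refine ⟨Real.sqrt (c0 + c1), ?_, (Real.sq_sqrt hc01).symm⟩
    rw [key]
    rw [Real.sq_sqrt hc01]
    ring
  · rintro x ⟨μ, hμ, rfl⟩
    rw [key] at hμ
    rcases mul_eq_zero.mp hμ with h | h
    · simpa [h] using hc01
    · nlinarith [h]
end
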